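/- Let (C, S, W) be a category with a left resolvent functor (R, ε), and D a category with a saturated class of weak equivalences E. Let Cat_{S,E}(C, D) be the full subcategory of functors F : C → D with F(S) ⊆ E, with strong equivalences the natural transformations φ such that φ_X ∈ E for all X, and weak equivalences those φ with φ_M ∈ E for all cofibrant M. Then precomposition with R, with counit Fε : F∘R ⟹ F, is a left resolvent functor on Cat_{S,E}(C, D); hence this functor category is a left Cartan-Eilenberg category; and a functor F in it is cofibrant if and only if F(W) ⊆ E. -/

import Mathlib

open CategoryTheory

universe v u v' u'

section

variable {A : Type*} [Category A]

/-- An object `M` is `(S, W)`-cofibrant: for every `w : Y ⟶ X` in `W`, composition with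
`w` induces a bijection `A[S⁻¹](M, Y) → A[S⁻¹](M, X)`. -/
def Cofibrant (S W : MorphismProperty A) (M : A) : Prop :=
  ∀ ⦃Y X : A⦄ (w : Y ⟶ X), W w →
    Function.Bijective (fun g : S.Q.obj M ⟶ S.Q.obj Y => g ≫ S.Q.map w)

end

variable {C : Type u} [Category.{v} C] {D : Type u'} [Category.{v'} D]

/-- The full subcategory `Cat_{S,E}(C, D)` of functors sending `S` into `E`. -/
def SendsSE (S : MorphismProperty C) (E : MorphismProperty D) : (C ⥤ D) → Prop :=
  fun F => ∀ ⦃X Y : C⦄ (f : X ⟶ Y), S f → E (F.map f)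

/-- Strong equivalences in `Cat_{S,E}(C, D)`: natural transformations `φ` with
`φ_X ∈ E` for every object `X`. -/
def StildeProp (S : MorphismProperty C) (E : MorphismProperty D) :
    MorphismProperty (ObjectProperty.FullSubcategory (SendsSE S E)) :=
  fun _ _ φ => ∀ X : C, E (((ObjectProperty.ι (SendsSE S E)).map φ).app X)

/-- Weak equivalences in `Cat_{S,E}(C, D)`: natural transformations `φ` with
`φ_M ∈ E` for every cofibrant object `M` of `C`. -/
def WtildeProp (S W : MorphismProperty C) (E : MorphismProperty D) :
    MorphismProperty (ObjectProperty.FullSubcategory (SendsSE S E)) :=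
  fun _ _ φ => ∀ M : C, Cofibrant S W M →
    E (((ObjectProperty.ι (SendsSE S E)).map φ).app M)

/-!
Precomposition with `R` turns a weak equivalence `φ` of `Cat_{S,E}(C, D)` into a strong one,
since `(φ R)_X = φ_{R X}` and `R X` is cofibrant. Hence `R*` descends to the localisation at `S~`,
and its counit `F ε` to a natural transformation `R̄ ⟶ 𝟭`; wherever this counit is invertible,
composition with any `ψ ∈ W~` is bijective (as `R̄ ψ` is invertible), so the object is cofibrant.

Everything else rests on one observation: a map between cofibrant objects that lies in the
saturation of `W` is already an `S`-isomorphism, so every functor sending `S` into the saturated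
class `E` sends it into `E`. Conversely, if `F` is cofibrant then `F ε` is an `S~`-isomorphism,
so each `F ε_X` lies in `E`, and the naturality square of `ε` at `w ∈ W` puts `F w` in `E`.
-/

namespace CategoryTheory

variable {A : Type*} [Category A] {B : Type*} [Category B]

def MorphismProperty.IsSaturated (E : MorphismProperty B) : Prop :=
  ∀ ⦃X Y : B⦄ (f : X ⟶ Y), E f ↔ IsIso (E.Q.map f)

lemma MorphismProperty.IsInvertedBy.isIso_map_of_isIso_Q_map {W : MorphismProperty A}
    {G : A ⥤ B} (hG : W.IsInvertedBy G) {X Y : A} {g : X ⟶ Y} (hg : IsIso (W.Q.map g)) :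
    IsIso (G.map g) :=
  (NatIso.isIso_map_iff (Localization.fac G hG W.Q) g).1
    (inferInstanceAs (IsIso ((Localization.lift G hG W.Q).map (W.Q.map g))))

lemma MorphismProperty.map_mem_of_isIso_Q_map {W : MorphismProperty A} {E : MorphismProperty B}
    (hE : E.IsSaturated) {F : A ⥤ B}
    (hF : ∀ ⦃X Y : A⦄ (f : X ⟶ Y), W f → E (F.map f)) {X Y : A} {g : X ⟶ Y}
    (hg : IsIso (W.Q.map g)) : E (F.map g) :=
  (hE _).2 <| MorphismProperty.IsInvertedBy.isIso_map_of_isIso_Q_map (G := F ⋙ E.Q)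
    (fun _ _ f hf => (hE _).1 (hF f hf)) hg

lemma isIso_of_surjective_comp_of_injective_comp {X Y : B} (e : X ⟶ Y)
    (hsurj : Function.Surjective (fun g : Y ⟶ X => g ≫ e))
    (hinj : Function.Injective (fun g : X ⟶ X => g ≫ e)) : IsIso e := by
  obtain ⟨h, he⟩ := hsurj (𝟙 Y)
  exact ⟨h, hinj (by simp only [Category.assoc, he, Category.comp_id, Category.id_comp]), he⟩

lemma NatTrans.isIso_map_map_iff {T : A ⥤ A} (ε : T ⟶ 𝟭 A) (L : A ⥤ B)
    (hε : ∀ X, IsIso (L.map (ε.app X))) {X Y : A} (f : X ⟶ Y) :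
    IsIso (L.map (T.map f)) ↔ IsIso (L.map f) :=
  have : ∀ X, IsIso ((Functor.whiskerRight ε L).app X) := hε
  have : IsIso (Functor.whiskerRight ε L) := NatIso.isIso_of_isIso_app _
  NatIso.isIso_map_iff (asIso (Functor.whiskerRight ε L)) f

lemma NatTrans.bijective_comp_of_isIso {T : B ⥤ B} (η : T ⟶ 𝟭 B) {M Y X : B}
    [IsIso (η.app M)] (ψ : Y ⟶ X) [IsIso (T.map ψ)] :
    Function.Bijective (fun g : M ⟶ Y => g ≫ ψ) := by
  have nat : ∀ {Z Z' : B} (f : Z ⟶ Z'), T.map f ≫ η.app Z' = η.app Z ≫ f := fun f => by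
    simp
  refine ⟨fun a a' h => ?_,
    fun b => ⟨inv (η.app M) ≫ T.map b ≫ inv (T.map ψ) ≫ η.app Y, ?_⟩⟩
  · have hT : T.map a = T.map a' :=
      (cancel_mono (T.map ψ)).1 (by rw [← T.map_comp, ← T.map_comp]; exact congrArg T.map h)
    exact (cancel_epi (η.app M)).1 (by rw [← nat a, ← nat a', hT])
  · simp only [Category.assoc, ← nat ψ, IsIso.inv_hom_id_assoc, nat b]

lemma Localization.bijective_comp_map_of_isIso {A' : Type*} [Category A'] (L : A ⥤ A')
    (P : MorphismProperty A) [L.IsLocalization P] {T : A ⥤ A} (hT : P.IsInvertedBy (T ⋙ L))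
    (ε : T ⟶ 𝟭 A) {M : A} (hM : IsIso (L.map (ε.app M))) {Y X : A} (ψ : Y ⟶ X)
    (hψ : IsIso (L.map (T.map ψ))) :
    Function.Bijective (fun g : L.obj M ⟶ L.obj Y => g ≫ L.map ψ) := by
  let T' := Localization.lift (T ⋙ L) hT L
  let η : T' ⟶ 𝟭 A' := Localization.liftNatTrans L P (T ⋙ L) L T' (𝟭 A')
    (Functor.whiskerRight ε L : T ⋙ L ⟶ L)
  have : IsIso (η.app (L.obj M)) := by
    simp only [η, Localization.liftNatTrans_app, Functor.whiskerRight_app]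
    infer_instance
  have : IsIso (T'.map (L.map ψ)) :=
    (NatIso.isIso_map_iff (Localization.Lifting.iso L P (T ⋙ L) T') ψ).2 hψ
  exact η.bijective_comp_of_isIso (L.map ψ)

end CategoryTheory

namespace Cofibrant

variable {A : Type*} [Category A] {S W : MorphismProperty A}

lemma bijective_comp_of_isIso_Q_map {M : A} (hM : Cofibrant S W M) {Y X : A} (g : Y ⟶ X)
    (hg : IsIso (W.Q.map g)) :
    Function.Bijective (fun h : S.Q.obj M ⟶ S.Q.obj Y => h ≫ S.Q.map g) :=
  (isIso_iff_bijective _).1 <|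
    MorphismProperty.IsInvertedBy.isIso_map_of_isIso_Q_map
      (G := S.Q ⋙ coyoneda.obj (Opposite.op (S.Q.obj M)))
      (fun _ _ w hw => (isIso_iff_bijective _).2 (hM w hw)) hg

lemma isIso_Q_map_of_isIso_Q_map {M N : A} (hM : Cofibrant S W M) (hN : Cofibrant S W N)
    (g : M ⟶ N) (hg : IsIso (W.Q.map g)) : IsIso (S.Q.map g) :=
  isIso_of_surjective_comp_of_injective_comp _ (hN.bijective_comp_of_isIso_Q_map g hg).2
    (hM.bijective_comp_of_isIso_Q_map g hg).1

end Cofibrant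

structure LeftResolvent {A : Type*} [Category A] (S W : MorphismProperty A) where
  functor : A ⥤ A
  counit : functor ⟶ 𝟭 A
  cofibrant_obj (X : A) : Cofibrant S W (functor.obj X)
  isIso_Q_map_counit_app (X : A) : IsIso (W.Q.map (counit.app X))

namespace LeftResolvent

variable {A : Type*} [Category A] {S W : MorphismProperty A} (P : LeftResolvent S W)

lemma isIso_Q_map_map_iff {X Y : A} (f : X ⟶ Y) :
    IsIso (W.Q.map (P.functor.map f)) ↔ IsIso (W.Q.map f) :=
  P.counit.isIso_map_map_iff W.Q P.isIso_Q_map_counit_app f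

lemma isIso_Q_map_counit_app_of_cofibrant {M : A} (hM : Cofibrant S W M) :
    IsIso (S.Q.map (P.counit.app M)) :=
  (P.cofibrant_obj M).isIso_Q_map_of_isIso_Q_map hM _ (P.isIso_Q_map_counit_app M)

end LeftResolvent

local notation "Cat[" S ", " E "]" => ObjectProperty.FullSubcategory (SendsSE S E)

section FunctorCategory

variable {S W : MorphismProperty C} {E : MorphismProperty D}

lemma SendsSE.map_mem_of_cofibrant (hE : E.IsSaturated) {F : C ⥤ D} (hF : SendsSE S E F)
    {M N : C} (hM : Cofibrant S W M) (hN : Cofibrant S W N) {g : M ⟶ N}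
    (hg : IsIso (W.Q.map g)) :
    E (F.map g) :=
  MorphismProperty.map_mem_of_isIso_Q_map hE hF (hM.isIso_Q_map_of_isIso_Q_map hN g hg)

lemma StildeProp.le_WtildeProp : StildeProp S E ≤ WtildeProp S W E :=
  fun _ _ _ hφ M _ => hφ M

namespace LeftResolvent

variable (P : LeftResolvent S W)

lemma sendsSE_functor_comp (hE : E.IsSaturated)
    (le_sat : ∀ ⦃X Y : C⦄ (f : X ⟶ Y), S f → IsIso (W.Q.map f))
    {F : C ⥤ D} (hF : SendsSE S E F) : SendsSE S E (P.functor ⋙ F) :=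
  fun X Y f hf => hF.map_mem_of_cofibrant hE (P.cofibrant_obj X) (P.cofibrant_obj Y)
    ((P.isIso_Q_map_map_iff f).2 (le_sat f hf))

variable (hE : E.IsSaturated)
  (le_sat : ∀ ⦃X Y : C⦄ (f : X ⟶ Y), S f → IsIso (W.Q.map f))

def precompFunctor : Cat[S, E] ⥤ Cat[S, E] :=
  ObjectProperty.lift _ (ObjectProperty.ι _ ⋙ (Functor.whiskeringLeft C C D).obj P.functor)
    fun F => P.sendsSE_functor_comp hE le_sat F.property

def precompCounit : P.precompFunctor hE le_sat ⟶ 𝟭 Cat[S, E] where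
  app F := ObjectProperty.homMk (Functor.whiskerRight P.counit F.obj)
  naturality _ _ φ :=
    ObjectProperty.hom_ext _ <|
      NatTrans.ext (funext fun X => (φ.hom.naturality (P.counit.app X)).symm)

lemma precompFunctor_map_mem_StildeProp {F G : Cat[S, E]} {φ : F ⟶ G}
    (hφ : WtildeProp S W E φ) :
    StildeProp S E ((P.precompFunctor hE le_sat).map φ) :=
  fun X => hφ _ (P.cofibrant_obj X)

lemma precompCounit_app_mem_WtildeProp (F : Cat[S, E]) :
    WtildeProp S W E ((P.precompCounit hE le_sat).app F) :=
  fun M hM => F.property.map_mem_of_cofibrant hE (P.cofibrant_obj M) hM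
    (P.isIso_Q_map_counit_app M)

lemma cofibrant_of_isIso_Q_map_precompCounit_app {F : Cat[S, E]}
    (hF : IsIso ((StildeProp S E).Q.map ((P.precompCounit hE le_sat).app F))) :
    Cofibrant (StildeProp S E) (WtildeProp S W E) F := by
  have hT {G H : Cat[S, E]} {ψ : G ⟶ H} (hψ : WtildeProp S W E ψ) :
      IsIso ((StildeProp S E).Q.map ((P.precompFunctor hE le_sat).map ψ)) :=
    Localization.inverts _ _ _ (P.precompFunctor_map_mem_StildeProp hE le_sat hψ)
  exact fun _ _ ψ hψ => Localization.bijective_comp_map_of_isIso (StildeProp S E).Q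
    (StildeProp S E) (fun _ _ _ hφ => hT (StildeProp.le_WtildeProp _ hφ)) _ hF ψ (hT hψ)

def precomp : LeftResolvent (StildeProp S E) (WtildeProp S W E) where
  functor := P.precompFunctor hE le_sat
  counit := P.precompCounit hE le_sat
  cofibrant_obj F := P.cofibrant_of_isIso_Q_map_precompCounit_app hE le_sat <|
    Localization.inverts (StildeProp S E).Q (StildeProp S E) _ fun X =>
      F.property.map_mem_of_cofibrant hE (P.cofibrant_obj _) (P.cofibrant_obj X)
        ((P.isIso_Q_map_map_iff _).2 (P.isIso_Q_map_counit_app X))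
  isIso_Q_map_counit_app F :=
    Localization.inverts _ _ _ (P.precompCounit_app_mem_WtildeProp hE le_sat F)

end LeftResolvent

lemma LeftResolvent.cofibrant_iff_map_mem (P : LeftResolvent S W) (hE : E.IsSaturated)
    (le_sat : ∀ ⦃X Y : C⦄ (f : X ⟶ Y), S f → IsIso (W.Q.map f)) (F : Cat[S, E]) :
    Cofibrant (StildeProp S E) (WtildeProp S W E) F ↔
      ∀ ⦃X Y : C⦄ (w : X ⟶ Y), W w → E (F.obj.map w) := by
  constructor
  · intro hF X Y w hw
    have hε : ∀ X, IsIso (E.Q.map (F.obj.map (P.counit.app X))) := fun X => (hE _).1 <|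
      MorphismProperty.map_mem_of_isIso_Q_map hE (W := StildeProp S E)
        (F := ObjectProperty.ι _ ⋙ (evaluation C D).obj X)
        (fun _ _ φ hφ => hφ X) ((P.precomp hE le_sat).isIso_Q_map_counit_app_of_cofibrant hF)
    have hRw : E (F.obj.map (P.functor.map w)) :=
      F.property.map_mem_of_cofibrant hE (P.cofibrant_obj X) (P.cofibrant_obj Y)
        ((P.isIso_Q_map_map_iff w).2 (Localization.inverts _ W w hw))
    exact (hE _).2 <|
      (P.counit.isIso_map_map_iff (F.obj ⋙ E.Q) hε w).1 ((hE _).1 hRw)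
  · intro hF
    refine P.cofibrant_of_isIso_Q_map_precompCounit_app hE le_sat
      (Localization.inverts (StildeProp S E).Q (StildeProp S E) _ fun X => ?_)
    exact MorphismProperty.map_mem_of_isIso_Q_map hE hF (P.isIso_Q_map_counit_app X)

end FunctorCategory

theorem functor_category_CE_general
    (S W : MorphismProperty C)
    (le_sat : ∀ ⦃X Y : C⦄ (f : X ⟶ Y), S f → IsIso (W.Q.map f))
    (R : C ⥤ C) (ε : R ⟶ 𝟭 C)
    (hcof : ∀ X : C, Cofibrant S W (R.obj X))
    (hε : ∀ X : C, IsIso (W.Q.map (ε.app X)))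
    (E : MorphismProperty D)
    (hE : ∀ ⦃X Y : D⦄ (f : X ⟶ Y), E f ↔ IsIso (E.Q.map f)) :
    ∃ (Rstar : ObjectProperty.FullSubcategory (SendsSE S E) ⥤ ObjectProperty.FullSubcategory (SendsSE S E))
      (εstar : Rstar ⟶ 𝟭 (ObjectProperty.FullSubcategory (SendsSE S E)))
      (fac : Rstar ⋙ ObjectProperty.ι (SendsSE S E) =
        ObjectProperty.ι (SendsSE S E) ⋙ (Functor.whiskeringLeft C C D).obj R),
      (∀ (F : ObjectProperty.FullSubcategory (SendsSE S E)) (X : C),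
        ((ObjectProperty.ι (SendsSE S E)).map (εstar.app F)).app X =
          eqToHom (Functor.congr_obj (Functor.congr_obj fac F) X) ≫
            F.obj.map (ε.app X)) ∧
      (∀ F : ObjectProperty.FullSubcategory (SendsSE S E),
        Cofibrant (StildeProp S E) (WtildeProp S W E) (Rstar.obj F)) ∧
      (∀ F : ObjectProperty.FullSubcategory (SendsSE S E),
        IsIso ((WtildeProp S W E).Q.map (εstar.app F))) ∧
      (∀ F : ObjectProperty.FullSubcategory (SendsSE S E),
        ∃ (M : ObjectProperty.FullSubcategory (SendsSE S E)) (e : M ⟶ F),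
          Cofibrant (StildeProp S E) (WtildeProp S W E) M ∧
          IsIso ((WtildeProp S W E).Q.map e)) ∧
      (∀ F : ObjectProperty.FullSubcategory (SendsSE S E),
        Cofibrant (StildeProp S E) (WtildeProp S W E) F ↔
          ∀ ⦃X Y : C⦄ (w : X ⟶ Y), W w → E (F.obj.map w)) := by
  let P : LeftResolvent S W := ⟨R, ε, hcof, hε⟩
  let Pstar := P.precomp hE le_sat
  refine ⟨Pstar.functor, Pstar.counit, rfl, fun F X => ?_, Pstar.cofibrant_obj,
    Pstar.isIso_Q_map_counit_app,
    fun F => ⟨_, _, Pstar.cofibrant_obj F, Pstar.isIso_Q_map_counit_app F⟩,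
    P.cofibrant_iff_map_mem hE le_sat⟩
  exact (Category.id_comp _).symm

/-- Let `(C, S, W)` have a left resolvent functor `(R, ε)` (each `R X` cofibrant, each
`ε_X` in the saturation of `W`), and let `E` be a saturated class of weak equivalences on
`D`.  Then precomposition with `R`, with counit `F ∗ ε`, defines a left resolvent functor
`(R*, ε*)` on `(Cat_{S,E}(C, D), S~, W~)`; hence each `R*(F)` is cofibrant and each
`ε*_F` lies in the saturation of `W~`, the functor category is a left Cartan-Eilenberg
category (every functor has a cofibrant left model), and a functor `F` in it is cofibrant
if and only if `F(W) ⊆ E`. -/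
theorem functor_category_CE
    (S W : MorphismProperty C)
    (comp_S : ∀ ⦃X Y Z : C⦄ (f : X ⟶ Y) (g : Y ⟶ Z), S f → S g → S (f ≫ g))
    (comp_W : ∀ ⦃X Y Z : C⦄ (f : X ⟶ Y) (g : Y ⟶ Z), W f → W g → W (f ≫ g))
    (iso_S : ∀ ⦃X Y : C⦄ (f : X ⟶ Y), IsIso f → S f)
    (iso_W : ∀ ⦃X Y : C⦄ (f : X ⟶ Y), IsIso f → W f)
    (le_sat : ∀ ⦃X Y : C⦄ (f : X ⟶ Y), S f → IsIso (W.Q.map f))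
    (R : C ⥤ C) (ε : R ⟶ 𝟭 C)
    (hcof : ∀ X : C, Cofibrant S W (R.obj X))
    (hε : ∀ X : C, IsIso (W.Q.map (ε.app X)))
    (E : MorphismProperty D)
    (hE : ∀ ⦃X Y : D⦄ (f : X ⟶ Y), E f ↔ IsIso (E.Q.map f)) :
    ∃ (Rstar : ObjectProperty.FullSubcategory (SendsSE S E) ⥤ ObjectProperty.FullSubcategory (SendsSE S E))
      (εstar : Rstar ⟶ 𝟭 (ObjectProperty.FullSubcategory (SendsSE S E)))
      (fac : Rstar ⋙ ObjectProperty.ι (SendsSE S E) =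
        ObjectProperty.ι (SendsSE S E) ⋙ (Functor.whiskeringLeft C C D).obj R),
      (∀ (F : ObjectProperty.FullSubcategory (SendsSE S E)) (X : C),
        ((ObjectProperty.ι (SendsSE S E)).map (εstar.app F)).app X =
          eqToHom (Functor.congr_obj (Functor.congr_obj fac F) X) ≫
            F.obj.map (ε.app X)) ∧
      (∀ F : ObjectProperty.FullSubcategory (SendsSE S E),
        Cofibrant (StildeProp S E) (WtildeProp S W E) (Rstar.obj F)) ∧
      (∀ F : ObjectProperty.FullSubcategory (SendsSE S E),
        IsIso ((WtildeProp S W E).Q.map (εstar.app F))) ∧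
      (∀ F : ObjectProperty.FullSubcategory (SendsSE S E),
        ∃ (M : ObjectProperty.FullSubcategory (SendsSE S E)) (e : M ⟶ F),
          Cofibrant (StildeProp S E) (WtildeProp S W E) M ∧
          IsIso ((WtildeProp S W E).Q.map e)) ∧
      (∀ F : ObjectProperty.FullSubcategory (SendsSE S E),
        Cofibrant (StildeProp S E) (WtildeProp S W E) F ↔
          ∀ ⦃X Y : C⦄ (w : X ⟶ Y), W w → E (F.obj.map w)) :=
  functor_category_CE_general S W le_sat R ε hcof hε E hE
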